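/- arXiv:1911.03775 — 5 statements merged into one kernel-verified Lean document; each statement's English description precedes it below -/
import Mathlib

section
/- Let d ≥ 1 and p_1, …, p_d ∈ (0,1), and set μ = p_1 + ⋯ + p_d. In anisotropic oriented Bernoulli percolation on ℤ^d, for every n ≥ 1 the second moments of W_n = X_n/μ^n satisfy the recursion 𝔼[W_{n+1}²] = 𝔼[W_n²] + (σ²/μ²)·a_n, where σ² = ∑_{i=1}^d p_i(1−p_i) is the variance of the number of open oriented edges leaving a fixed vertex. Consequently 𝔼[W_{n+1}²] = 𝔼[W_1²] + (σ²/μ²) ∑_{j=1}^n a_j. -/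
open MeasureTheory ProbabilityTheory

/-- The `i`-th standard basis vector of `ℤ^d`. -/
def stdBasis (d : ℕ) (i : Fin d) : Fin d → ℤ := fun j => if j = i then 1 else 0

/-- A percolation configuration: each oriented edge `⟨x, x + e i⟩`, encoded as the pair
`(x, i)`, is either open (`true`) or closed (`false`). -/
abbrev Config (d : ℕ) := ((Fin d → ℤ) × Fin d) → Bool

/-- The position after `j` steps of the oriented path starting at the origin whose
sequence of step directions is `γ`. -/
def pathPos (d : ℕ) {n : ℕ} (γ : Fin n → Fin d) (j : ℕ) : Fin d → ℤ :=
  ∑ t ∈ Finset.univ.filter (fun t : Fin n => (t : ℕ) < j), stdBasis d (γ t)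

/-- The oriented path with step directions `γ` starting at the origin is open in the
configuration `ω`: each of its oriented edges is open. -/
def pathOpen (d : ℕ) {n : ℕ} (ω : Config d) (γ : Fin n → Fin d) : Prop :=
  ∀ j : Fin n, ω (pathPos d γ (j : ℕ), γ j) = true

/-- The open cluster of the origin: all vertices reachable from `0` by an open oriented path. -/
def cluster (d : ℕ) (ω : Config d) : Set (Fin d → ℤ) :=
  {x | ∃ (n : ℕ) (γ : Fin n → Fin d), pathOpen d ω γ ∧ pathPos d γ n = x}

/-- The set of oriented edges used by an oriented path with step directions `γ`. -/
noncomputable def pathEdges (d : ℕ) {n : ℕ} (γ : Fin n → Fin d) :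
    Finset ((Fin d → ℤ) × Fin d) :=
  Finset.image (fun j : Fin n => (pathPos d γ (j : ℕ), γ j)) Finset.univ

/-- `ℙ(γ₁, γ₂ open)`: the product, over the distinct oriented edges used by `γ₁` or `γ₂`,
of the probability `p i` of each edge (an edge in direction `e i` contributes `p i`). -/
noncomputable def pairProb (d : ℕ) (p : Fin d → ℝ) {n : ℕ} (γ₁ γ₂ : Fin n → Fin d) : ℝ :=
  ∏ e ∈ pathEdges d γ₁ ∪ pathEdges d γ₂, p e.2

/-- `a n = μ^{-2n} ∑_{(γ₁,γ₂) ∈ 𝒞_n², f(γ₁)=f(γ₂)} ℙ(γ₁, γ₂ open)`. -/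
noncomputable def aSeq (d : ℕ) (p : Fin d → ℝ) (n : ℕ) : ℝ :=
  (∑ gg ∈ Finset.univ.filter
      (fun gg : (Fin n → Fin d) × (Fin n → Fin d) => pathPos d gg.1 n = pathPos d gg.2 n),
    pairProb d p gg.1 gg.2) / (∑ i, p i) ^ (2 * n)

open Classical in
/-- `b m = μ^{-2m} ∑_{(γ₁,γ₂) ∈ A_m} ℙ(γ₁, γ₂ open)`, where `A_m` is the set of pairs of
paths of length `m` whose intermediate vertices are everywhere distinct and whose final
vertices coincide. -/
noncomputable def bSeq (d : ℕ) (p : Fin d → ℝ) (m : ℕ) : ℝ :=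
  (∑ gg ∈ Finset.univ.filter
      (fun gg : (Fin m → Fin d) × (Fin m → Fin d) =>
        (∀ i ∈ Finset.Ioo 0 m, pathPos d gg.1 i ≠ pathPos d gg.2 i) ∧
          pathPos d gg.1 m = pathPos d gg.2 m),
    pairProb d p gg.1 gg.2) / (∑ i, p i) ^ (2 * m)

/-- `Xcount d n ω` is the number of open oriented paths of length `n` starting at the
origin in the configuration `ω`. -/
noncomputable def Xcount (d n : ℕ) (ω : Config d) : ℕ :=
  Nat.card {γ : Fin n → Fin d // pathOpen d ω γ}

/-!
Expanding the square, `𝔼[X_n²] = S_n := ∑_{γ₁, γ₂ ∈ 𝒞_n} ℙ(γ₁, γ₂ open)` by independence of the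
edges. Extending `γ₁, γ₂` by steps `e_{i₁}, e_{i₂}` adds the two edges `(f(γ₁), i₁), (f(γ₂), i₂)`
leaving their endpoints; these lie at level `n` (coordinate sum), so no path of length `n` uses
them, and they coincide exactly when `f(γ₁) = f(γ₂)` and `i₁ = i₂`. Summing over `i₁, i₂`
therefore multiplies `ℙ(γ₁, γ₂ open)` by `μ²`, plus `σ²` when the endpoints agree:
`S_{n+1} = μ² S_n + σ² μ^{2n} a_n`. Dividing by `μ^{2(n+1)}` gives the recursion, and summing
it gives the second identity.
-/

open Finset

lemma measureReal_forall_mem_eq_true {ι : Type*} {P : Measure (ι → Bool)}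
    (hindep : iIndepFun (fun i (ω : ι → Bool) => ω i) P) {q : ι → ℝ} (hq : ∀ i, 0 ≤ q i)
    (hmarg : ∀ i, P {ω | ω i = true} = ENNReal.ofReal (q i)) (S : Finset ι) :
    P.real {ω | ∀ i ∈ S, ω i = true} = ∏ i ∈ S, q i := by
  have hset : {ω : ι → Bool | ∀ i ∈ S, ω i = true} = ⋂ i ∈ S, (fun ω => ω i) ⁻¹' {true} := by
    ext; simp
  rw [measureReal_def, hset, hindep.measure_inter_preimage_eq_mul S
      (sets := fun _ => {true}) fun _ _ => measurableSet_singleton true,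
    prod_congr rfl fun i _ => show P ((fun ω => ω i) ⁻¹' {true}) = _ from hmarg i,
    ← ENNReal.ofReal_prod_of_nonneg fun i _ => hq i,
    ENNReal.toReal_ofReal (prod_nonneg fun i _ => hq i)]

lemma integral_sq_natCard_mem {α Ω : Type*} [Fintype α] [MeasurableSpace Ω] {P : Measure Ω}
    [IsFiniteMeasure P] {A : α → Set Ω} (hA : ∀ a, MeasurableSet (A a)) :
    ∫ ω, (Nat.card {a // ω ∈ A a} : ℝ) ^ 2 ∂P = ∑ ab : α × α, P.real (A ab.1 ∩ A ab.2) := by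
  classical
  have hsq : ∀ ω, (Nat.card {a // ω ∈ A a} : ℝ) ^ 2
      = ∑ ab : α × α, (A ab.1 ∩ A ab.2).indicator 1 ω := by
    intro ω
    have hcount : (Nat.card {a // ω ∈ A a} : ℝ) = ∑ a, (A a).indicator 1 ω := by
      simp [Nat.card_eq_fintype_card, Fintype.card_subtype, Set.indicator_apply]
    rw [hcount, sq, sum_mul_sum, ← Fintype.sum_prod_type']
    simp [Set.inter_indicator_one]
  simp_rw [hsq]
  rw [integral_finsetSum _ fun ab _ => (integrable_const 1).indicator ((hA _).inter (hA _))]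
  exact sum_congr rfl fun ab _ => integral_indicator_one ((hA _).inter (hA _))

lemma eq_add_mul_sum_Icc_of_succ {u a : ℕ → ℝ} {c : ℝ}
    (h : ∀ n, 1 ≤ n → u (n + 1) = u n + c * a n) {n : ℕ} (hn : 1 ≤ n) :
    u (n + 1) = u 1 + c * ∑ j ∈ Icc 1 n, a j := by
  induction n, hn using Nat.le_induction with
  | base => simp [h 1 le_rfl]
  | succ m hm ih => rw [h (m + 1) (by omega), ih, sum_Icc_succ_top (by omega)]; ring

section Paths

variable {d n : ℕ}

lemma pathPos_snoc_of_le (γ : Fin n → Fin d) (i : Fin d) {j : ℕ} (hj : j ≤ n) :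
    pathPos d (Fin.snoc γ i) j = pathPos d γ j := by
  rw [pathPos, pathPos, sum_filter, sum_filter, Fin.sum_univ_castSucc]
  simp only [Fin.snoc_castSucc, Fin.val_castSucc, Fin.val_last]
  rw [if_neg (by omega), add_zero]

lemma sum_pathPos_apply (γ : Fin n → Fin d) (j : ℕ) : ∑ k, pathPos d γ j k = min n j := by
  simp only [pathPos, Finset.sum_apply]
  rw [sum_comm]
  simp [stdBasis, Fin.card_filter_val_lt]

lemma pathPos_notMem_pathEdges (γ γ' : Fin n → Fin d) (i : Fin d) :
    (pathPos d γ n, i) ∉ pathEdges d γ' := by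
  simp only [pathEdges, mem_image, mem_univ, true_and, not_exists]
  intro j hj
  obtain ⟨hpos, -⟩ := Prod.mk.inj hj
  have hlevel := sum_pathPos_apply γ' j
  rw [hpos, sum_pathPos_apply] at hlevel
  omega

lemma pathEdges_snoc (γ : Fin n → Fin d) (i : Fin d) :
    pathEdges d (Fin.snoc γ i) = insert (pathPos d γ n, i) (pathEdges d γ) := by
  ext e
  simp only [pathEdges, mem_insert, mem_image, mem_univ, true_and]
  constructor
  · rintro ⟨j, rfl⟩
    induction j using Fin.lastCases with
    | last => simp [pathPos_snoc_of_le γ i le_rfl]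
    | cast k => exact Or.inr ⟨k, by simp [pathPos_snoc_of_le γ i k.2.le]⟩
  · rintro (rfl | ⟨j, rfl⟩)
    · exact ⟨Fin.last n, by simp [pathPos_snoc_of_le γ i le_rfl]⟩
    · exact ⟨j.castSucc, by simp [pathPos_snoc_of_le γ i j.2.le]⟩

lemma pairProb_snoc (p : Fin d → ℝ) (γ₁ γ₂ : Fin n → Fin d) (i₁ i₂ : Fin d) :
    pairProb d p (Fin.snoc γ₁ i₁) (Fin.snoc γ₂ i₂)
      = (if (pathPos d γ₁ n, i₁) = (pathPos d γ₂ n, i₂) then p i₁ else p i₁ * p i₂)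
        * pairProb d p γ₁ γ₂ := by
  have hnew : ∀ (γ : Fin n → Fin d) i, (pathPos d γ n, i) ∉ pathEdges d γ₁ ∪ pathEdges d γ₂ :=
    fun γ i => notMem_union.2 ⟨pathPos_notMem_pathEdges γ γ₁ i, pathPos_notMem_pathEdges γ γ₂ i⟩
  rw [pairProb, pathEdges_snoc, pathEdges_snoc, insert_union, union_insert]
  split_ifs with he
  · rw [← he, insert_idem, prod_insert (hnew γ₁ i₁), pairProb]
  · rw [prod_insert (mt mem_insert.1 (not_or.2 ⟨he, hnew γ₁ i₁⟩)), prod_insert (hnew γ₂ i₂),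
      pairProb, mul_assoc]

end Paths

lemma sum_sum_ite_mk_eq_mk {d : ℕ} (p : Fin d → ℝ) (x₁ x₂ : Fin d → ℤ) :
    ∑ i₁, ∑ i₂, (if ((x₁, i₁) : (Fin d → ℤ) × Fin d) = (x₂, i₂) then p i₁ else p i₁ * p i₂)
      = (∑ i, p i) ^ 2 + if x₁ = x₂ then ∑ i, p i * (1 - p i) else 0 := by
  split_ifs with hx
  · subst hx
    have hsplit : ∀ i₁ i₂ : Fin d, (if i₁ = i₂ then p i₁ else p i₁ * p i₂)
        = p i₁ * p i₂ + if i₁ = i₂ then p i₁ * (1 - p i₁) else 0 := by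
      intro i₁ i₂
      split_ifs with hi
      · subst hi; ring
      · ring
    simp only [Prod.mk.injEq, true_and, hsplit, sum_add_distrib, sum_ite_eq, mem_univ, if_true,
      sq, sum_mul_sum]
  · simp [hx, sq, sum_mul_sum]

noncomputable def sumPairProb (d : ℕ) (p : Fin d → ℝ) (n : ℕ) : ℝ :=
  ∑ γγ : (Fin n → Fin d) × (Fin n → Fin d), pairProb d p γγ.1 γγ.2

noncomputable def sumPairProbSameEnd (d : ℕ) (p : Fin d → ℝ) (n : ℕ) : ℝ :=
  ∑ γγ ∈ univ.filter
      (fun γγ : (Fin n → Fin d) × (Fin n → Fin d) => pathPos d γγ.1 n = pathPos d γγ.2 n),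
    pairProb d p γγ.1 γγ.2

lemma aSeq_eq (d : ℕ) (p : Fin d → ℝ) (n : ℕ) :
    aSeq d p n = sumPairProbSameEnd d p n / (∑ i, p i) ^ (2 * n) := rfl

lemma sumPairProb_succ {d : ℕ} (p : Fin d → ℝ) (n : ℕ) :
    sumPairProb d p (n + 1) = (∑ i, p i) ^ 2 * sumPairProb d p n
      + (∑ i, p i * (1 - p i)) * sumPairProbSameEnd d p n := by
  have hsnoc : sumPairProb d p (n + 1) = ∑ γγ : (Fin n → Fin d) × (Fin n → Fin d),
      ∑ ii : Fin d × Fin d, pairProb d p (Fin.snoc γγ.1 ii.1) (Fin.snoc γγ.2 ii.2) := by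
    let snoc : (Fin n → Fin d) × Fin d ≃ (Fin (n + 1) → Fin d) :=
      (Equiv.prodComm _ _).trans (Fin.snocEquiv fun _ => Fin d)
    rw [← Fintype.sum_prod_type', sumPairProb]
    exact (Fintype.sum_equiv ((Equiv.prodProdProdComm _ _ _ _).trans (snoc.prodCongr snoc)) _ _
      fun _ => rfl).symm
  rw [hsnoc, sumPairProb, sumPairProbSameEnd, sum_filter, mul_sum, mul_sum, ← sum_add_distrib]
  refine sum_congr rfl fun γγ _ => ?_
  simp only [Fintype.sum_prod_type, pairProb_snoc, ← sum_mul, sum_sum_ite_mk_eq_mk]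
  split_ifs <;> ring

section Percolation

variable {d n : ℕ}

lemma pathOpen_iff_forall_mem_pathEdges (ω : Config d) (γ : Fin n → Fin d) :
    pathOpen d ω γ ↔ ∀ e ∈ pathEdges d γ, ω e = true := by
  simp [pathOpen, pathEdges]

lemma measurableSet_pathOpen (γ : Fin n → Fin d) :
    MeasurableSet {ω : Config d | pathOpen d ω γ} := by
  simp only [pathOpen, Set.ofPred_forall]
  measurability

lemma measureReal_pathOpen_inter {p : Fin d → ℝ} (hp : ∀ i, 0 ≤ p i) {P : Measure (Config d)}
    (hindep : iIndepFun (fun e (ω : Config d) => ω e) P)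
    (hmarg : ∀ e : (Fin d → ℤ) × Fin d, P {ω : Config d | ω e = true} = ENNReal.ofReal (p e.2))
    (γ₁ γ₂ : Fin n → Fin d) :
    P.real ({ω | pathOpen d ω γ₁} ∩ {ω | pathOpen d ω γ₂}) = pairProb d p γ₁ γ₂ := by
  have hset : {ω | pathOpen d ω γ₁} ∩ {ω | pathOpen d ω γ₂}
      = {ω : Config d | ∀ e ∈ pathEdges d γ₁ ∪ pathEdges d γ₂, ω e = true} := by
    ext ω
    simp only [Set.mem_inter_iff, Set.mem_ofPred_eq, pathOpen_iff_forall_mem_pathEdges,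
      forall_mem_union]
  rw [hset]
  exact measureReal_forall_mem_eq_true hindep (fun e => hp e.2) hmarg _

lemma integral_Xcount_sq {p : Fin d → ℝ} (hp : ∀ i, 0 ≤ p i) {P : Measure (Config d)}
    [IsFiniteMeasure P] (hindep : iIndepFun (fun e (ω : Config d) => ω e) P)
    (hmarg : ∀ e : (Fin d → ℤ) × Fin d, P {ω : Config d | ω e = true} = ENNReal.ofReal (p e.2)) :
    ∫ ω, (Xcount d n ω : ℝ) ^ 2 ∂P = sumPairProb d p n := by
  rw [sumPairProb,
    ← sum_congr rfl fun γγ _ => measureReal_pathOpen_inter hp hindep hmarg γγ.1 γγ.2]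
  exact integral_sq_natCard_mem fun γ => measurableSet_pathOpen γ

end Percolation

theorem second_moment_recursion
    (d : ℕ) (hd : 1 ≤ d)
    (p : Fin d → ℝ) (hp : ∀ i, p i ∈ Set.Ioo (0 : ℝ) 1)
    (μ : ℝ) (hμ : μ = ∑ i, p i)
    (σ2 : ℝ) (hσ2 : σ2 = ∑ i, p i * (1 - p i))
    (P : Measure (Config d)) [IsProbabilityMeasure P]
    (hindep : iIndepFun (fun e (ω : Config d) => ω e) P)
    (hmarg : ∀ e : (Fin d → ℤ) × Fin d, P {ω : Config d | ω e = true} = ENNReal.ofReal (p e.2))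
    (W : ℕ → Config d → ℝ) (hW : ∀ n ω, W n ω = (Xcount d n ω : ℝ) / μ ^ n) :
    (∀ n : ℕ, 1 ≤ n →
        ∫ ω, (W (n + 1) ω) ^ 2 ∂P = ∫ ω, (W n ω) ^ 2 ∂P + σ2 / μ ^ 2 * aSeq d p n) ∧
      ∀ n : ℕ, 1 ≤ n →
        ∫ ω, (W (n + 1) ω) ^ 2 ∂P
          = ∫ ω, (W 1 ω) ^ 2 ∂P + σ2 / μ ^ 2 * ∑ j ∈ Finset.Icc 1 n, aSeq d p j := by
  have hμ_pos : 0 < μ := hμ ▸ sum_pos (fun i _ => (hp i).1) (univ_nonempty_iff.2 ⟨⟨0, hd⟩⟩)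
  have hmoment : ∀ n, ∫ ω, W n ω ^ 2 ∂P = sumPairProb d p n / μ ^ (2 * n) := by
    intro n
    simp_rw [hW, div_pow]
    rw [integral_div, integral_Xcount_sq (fun i => (hp i).1.le) hindep hmarg, ← pow_mul,
      mul_comm]
  have hstep : ∀ n, ∫ ω, W (n + 1) ω ^ 2 ∂P = ∫ ω, W n ω ^ 2 ∂P + σ2 / μ ^ 2 * aSeq d p n := by
    intro n
    rw [hmoment, hmoment, sumPairProb_succ, aSeq_eq, ← hμ, ← hσ2]
    field_simp
    ring
  exact ⟨fun n _ => hstep n, fun n hn =>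
    eq_add_mul_sum_Icc_of_succ (u := fun n => ∫ ω, W n ω ^ 2 ∂P) (fun m _ => hstep m) hn⟩
end

section
/- Let d ≥ 1 and p_1, …, p_d ∈ (0,1), and set μ = p_1 + ⋯ + p_d. Then, as an identity in [0, ∞], ∑_{n=1}^∞ a_n = ∑_{j=1}^∞ (∑_{m=1}^∞ b_m)^j. -/
/-! Split a pair of paths with a common endpoint at the first time `m ≥ 1` at which they meet:
the initial segments form a pair in `A_m`, the continuations a pair of length `n - m` with a
common endpoint. Edges of the initial segments have coordinate sum `< m` and those of the
continuations `≥ m`, so `ℙ` factorises and `a_n = ∑_{m=1}^n b_m a_{n-m}` with `a_0 = 1`.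
Iterating this renewal equation writes `a` as the sum of the convolution powers of `b`, and the
`j`-th convolution power has total mass `(∑ b_m)^j`. -/

open MeasureTheory ProbabilityTheory

open Finset
open scoped ENNReal

theorem Fin.exists_fin_add {m n : ℕ} (P : Fin (m + n) → Prop) :
    (∃ i, P i) ↔ (∃ i, P (castAdd n i)) ∨ ∃ j, P (natAdd m j) := by
  refine ⟨fun ⟨i, h⟩ => ?_, by rintro (⟨i, h⟩ | ⟨j, h⟩) <;> exact ⟨_, h⟩⟩
  induction i using Fin.addCases with
  | left i => exact .inl ⟨i, h⟩
  | right j => exact .inr ⟨j, h⟩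

theorem Nat.sInf_eq_iff_of_pos {s : Set ℕ} {m : ℕ} (hm : 0 < m) :
    sInf s = m ↔ m ∈ s ∧ ∀ i < m, i ∉ s := by
  constructor
  · rintro rfl
    exact ⟨Nat.sInf_mem (Nat.nonempty_of_pos_sInf hm), fun i => Nat.notMem_of_lt_sInf⟩
  · rintro ⟨hms, hlt⟩
    exact le_antisymm (Nat.sInf_le hms) (not_lt.1 fun h => hlt _ h (Nat.sInf_mem ⟨m, hms⟩))

theorem Finset.sum_Icc_one_succ_eq_sum_range {M : Type*} [AddCommMonoid M] (φ : ℕ → M) (n : ℕ) :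
    ∑ m ∈ Icc 1 (n + 1), φ m = ∑ k ∈ range (n + 1), φ (k + 1) := by
  rw [range_eq_Ico, sum_Ico_add' φ 0 (n + 1) 1]
  rfl

theorem ENNReal.tsum_mul_tsum_eq_tsum_sum_range (u v : ℕ → ℝ≥0∞) :
    (∑' n, u n) * ∑' n, v n = ∑' n, ∑ k ∈ range (n + 1), u k * v (n - k) := by
  simp_rw [← Nat.sum_antidiagonal_eq_sum_range_succ fun k l => u k * v l, ← Finset.tsum_subtype]
  calc (∑' n, u n) * ∑' n, v n = ∑' x : ℕ × ℕ, u x.1 * v x.2 := by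
        rw [ENNReal.tsum_prod (f := fun a b => u a * v b), ← ENNReal.tsum_mul_right]
        simp_rw [← ENNReal.tsum_mul_left]
    _ = ∑' x : Σ n, antidiagonal n, u x.2.1.1 * v x.2.1.2 :=
        (HasAntidiagonal.sigmaAntidiagonalEquivProd.tsum_eq (fun x => u x.1 * v x.2)).symm
    _ = _ := ENNReal.tsum_sigma' _

noncomputable def renewalConv (g h : ℕ → ℝ≥0∞) (n : ℕ) : ℝ≥0∞ :=
  ∑ m ∈ Icc 1 n, g m * h (n - m)

theorem tsum_renewalConv (g h : ℕ → ℝ≥0∞) :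
    ∑' n, renewalConv g h n = (∑' m, g (m + 1)) * ∑' n, h n := by
  rw [ENNReal.tsum_mul_tsum_eq_tsum_sum_range, tsum_eq_zero_add' ENNReal.summable]
  simp [renewalConv, sum_Icc_one_succ_eq_sum_range]

noncomputable def renewalPow (g : ℕ → ℝ≥0∞) : ℕ → ℕ → ℝ≥0∞
  | 0 => Pi.single 0 1
  | k + 1 => renewalConv g (renewalPow g k)

theorem tsum_renewalPow (g : ℕ → ℝ≥0∞) (k : ℕ) :
    ∑' n, renewalPow g k n = (∑' m, g (m + 1)) ^ k := by
  induction k with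
  | zero => simp [renewalPow]
  | succ k ih => rw [renewalPow, tsum_renewalConv, ih, pow_succ']

theorem eq_tsum_renewalPow {f g : ℕ → ℝ≥0∞} (h₀ : f 0 = 1)
    (hrec : ∀ n, 1 ≤ n → f n = renewalConv g f n) (n : ℕ) :
    f n = ∑' k, renewalPow g k n := by
  induction n using Nat.strong_induction_on with
  | _ n ih =>
    rcases n with _ | n
    · rw [tsum_eq_zero_add' ENNReal.summable]
      simp [h₀, renewalPow, renewalConv]
    · rw [tsum_eq_zero_add' ENNReal.summable, hrec _ n.succ_pos]
      simp only [renewalPow, renewalConv, Pi.single_apply, n.succ_ne_zero, if_false, zero_add]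
      rw [Summable.tsum_finsetSum fun _ _ => ENNReal.summable]
      refine sum_congr rfl fun m hm => ?_
      rw [ENNReal.tsum_mul_left, ih _ (Nat.sub_lt n.succ_pos (mem_Icc.1 hm).1)]

theorem tsum_succ_eq_tsum_pow_of_renewal {f g : ℕ → ℝ≥0∞} (h₀ : f 0 = 1)
    (hrec : ∀ n, 1 ≤ n → f n = ∑ m ∈ Icc 1 n, g m * f (n - m)) :
    ∑' n, f (n + 1) = ∑' j, (∑' m, g (m + 1)) ^ (j + 1) := by
  have h := congr_arg tsum (funext (eq_tsum_renewalPow h₀ hrec))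
  rw [ENNReal.tsum_comm, tsum_congr (tsum_renewalPow g), tsum_eq_zero_add' ENNReal.summable,
    tsum_eq_zero_add' ENNReal.summable (f := fun j => _ ^ j), h₀, pow_zero] at h
  exact (ENNReal.add_right_inj ENNReal.one_ne_top).1 h

section OrientedPaths

variable {d : ℕ}

theorem pathPos_zero {n : ℕ} (γ : Fin n → Fin d) : pathPos d γ 0 = 0 := by
  simp [pathPos]

theorem pathPos_of_le {n j : ℕ} (γ : Fin n → Fin d) (hj : n ≤ j) :
    pathPos d γ j = pathPos d γ n := by
  unfold pathPos
  congr 1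
  ext t
  simp only [mem_filter, mem_univ, true_and]
  omega

theorem sum_pathPos {n : ℕ} (γ : Fin n → Fin d) (j : ℕ) :
    ∑ i, pathPos d γ j i = (min n j : ℕ) := by
  simp only [pathPos, Finset.sum_apply]
  rw [Finset.sum_comm]
  simp [stdBasis, Fin.card_filter_val_lt]

theorem pathPos_append {m k : ℕ} (a : Fin m → Fin d) (b : Fin k → Fin d) (j : ℕ) :
    pathPos d (Fin.append a b) j = pathPos d a j + pathPos d b (j - m) := by
  simp only [pathPos, sum_filter, Fin.sum_univ_add, Fin.append_left, Fin.append_right,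
    Fin.val_castAdd, Fin.val_natAdd]
  congr 1
  refine sum_congr rfl fun t _ => if_congr ?_ rfl rfl
  omega

theorem pathPos_append_of_le {m k j : ℕ} (a : Fin m → Fin d) (b : Fin k → Fin d) (hj : j ≤ m) :
    pathPos d (Fin.append a b) j = pathPos d a j := by
  rw [pathPos_append, Nat.sub_eq_zero_of_le hj, pathPos_zero, add_zero]

theorem pathPos_append_add {m k : ℕ} (a : Fin m → Fin d) (b : Fin k → Fin d) (j : ℕ) :
    pathPos d (Fin.append a b) (m + j) = pathPos d a m + pathPos d b j := by
  rw [pathPos_append, pathPos_of_le a (Nat.le_add_right m j), Nat.add_sub_cancel_left]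

theorem sum_fst_mem_Ico_of_mem_pathEdges {n : ℕ} {γ : Fin n → Fin d}
    {e : (Fin d → ℤ) × Fin d} (he : e ∈ pathEdges d γ) : ∑ i, e.1 i ∈ Set.Ico 0 (n : ℤ) := by
  obtain ⟨j, -, rfl⟩ := mem_image.1 he
  rw [sum_pathPos, min_eq_right j.isLt.le]
  exact ⟨by positivity, by exact_mod_cast j.isLt⟩

theorem pathEdges_append {m k : ℕ} (a : Fin m → Fin d) (b : Fin k → Fin d) :
    pathEdges d (Fin.append a b) =
      pathEdges d a ∪ (pathEdges d b).image fun e => (pathPos d a m + e.1, e.2) := by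
  ext e
  simp only [pathEdges, mem_union, mem_image, mem_univ, true_and, Fin.exists_fin_add,
    Fin.val_castAdd, Fin.val_natAdd, Fin.append_left, Fin.append_right, exists_exists_eq_and,
    pathPos_append_add, pathPos_append_of_le, Fin.is_le']

theorem pairProb_append (p : Fin d → ℝ) {m k : ℕ} {a₁ a₂ : Fin m → Fin d}
    (b₁ b₂ : Fin k → Fin d) (hmeet : pathPos d a₁ m = pathPos d a₂ m) :
    pairProb d p (Fin.append a₁ b₁) (Fin.append a₂ b₂) =
      pairProb d p a₁ a₂ * pairProb d p b₁ b₂ := by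
  set shift := fun e : (Fin d → ℤ) × Fin d => (pathPos d a₁ m + e.1, e.2)
  -- Edges of the `aᵢ` lie at coordinate sum `< m`, translated edges of the `bᵢ` at `≥ m`.
  have hdisj : Disjoint (pathEdges d a₁ ∪ pathEdges d a₂)
      ((pathEdges d b₁ ∪ pathEdges d b₂).image shift) := by
    simp only [disjoint_left, mem_union, mem_image, not_exists, not_and]
    rintro e he e' he' rfl
    have hlow : ∑ i, (shift e').1 i < m := by
      rcases he with he | he <;> exact (sum_fst_mem_Ico_of_mem_pathEdges he).2
    have hhigh : 0 ≤ ∑ i, e'.1 i := by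
      rcases he' with he' | he' <;> exact (sum_fst_mem_Ico_of_mem_pathEdges he').1
    simp only [shift, Pi.add_apply, sum_add_distrib, sum_pathPos, min_self] at hlow
    omega
  have hinj : Set.InjOn shift ↑(pathEdges d b₁ ∪ pathEdges d b₂) := fun x _ y _ hxy =>
    Prod.ext (add_left_cancel (congr_arg Prod.fst hxy)) (congr_arg Prod.snd hxy :)
  rw [pairProb, pathEdges_append, pathEdges_append, ← hmeet, union_union_union_comm,
    ← image_union, prod_union hdisj, prod_image hinj]
  rfl

def meetingPairs (d n : ℕ) : Finset ((Fin n → Fin d) × (Fin n → Fin d)) :=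
  univ.filter fun gg => pathPos d gg.1 n = pathPos d gg.2 n

open Classical in
/-- The set `A_m` of the paper. -/
noncomputable def firstMeetingPairs (d m : ℕ) : Finset ((Fin m → Fin d) × (Fin m → Fin d)) :=
  univ.filter fun gg =>
    (∀ i ∈ Ioo 0 m, pathPos d gg.1 i ≠ pathPos d gg.2 i) ∧ pathPos d gg.1 m = pathPos d gg.2 m

noncomputable def firstMeet {n : ℕ} (gg : (Fin n → Fin d) × (Fin n → Fin d)) : ℕ :=
  sInf {i | 0 < i ∧ pathPos d gg.1 i = pathPos d gg.2 i}

theorem firstMeet_eq_iff {n m : ℕ} (gg : (Fin n → Fin d) × (Fin n → Fin d)) (hm : 0 < m) :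
    firstMeet gg = m ↔
      (∀ i ∈ Ioo 0 m, pathPos d gg.1 i ≠ pathPos d gg.2 i) ∧
        pathPos d gg.1 m = pathPos d gg.2 m := by
  rw [firstMeet, Nat.sInf_eq_iff_of_pos hm]
  simp only [Set.mem_ofPred_eq, mem_Ioo, hm, true_and, not_and]
  tauto

theorem firstMeet_mem_Icc {n : ℕ} {gg : (Fin n → Fin d) × (Fin n → Fin d)}
    (hgg : gg ∈ meetingPairs d n) (hn : 1 ≤ n) : firstMeet gg ∈ Icc 1 n := by
  have hn_mem : n ∈ {i | 0 < i ∧ pathPos d gg.1 i = pathPos d gg.2 i} := ⟨hn, (mem_filter.1 hgg).2⟩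
  exact mem_Icc.2 ⟨(Nat.sInf_mem ⟨n, hn_mem⟩).1, Nat.sInf_le hn_mem⟩

theorem append_mem_filter_firstMeet_iff {m k : ℕ} (hm : 0 < m) (a₁ a₂ : Fin m → Fin d)
    (b₁ b₂ : Fin k → Fin d) :
    (Fin.append a₁ b₁, Fin.append a₂ b₂) ∈ (meetingPairs d (m + k)).filter (firstMeet · = m) ↔
      (a₁, a₂) ∈ firstMeetingPairs d m ∧ (b₁, b₂) ∈ meetingPairs d k := by
  simp only [meetingPairs, firstMeetingPairs, mem_filter, mem_univ, true_and,
    firstMeet_eq_iff _ hm, pathPos_append_add]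
  have hprefix : ∀ i ∈ Ioo 0 m, (pathPos d (Fin.append a₁ b₁) i ≠ pathPos d (Fin.append a₂ b₂) i
      ↔ pathPos d a₁ i ≠ pathPos d a₂ i) := fun i hi => by
    rw [pathPos_append_of_le _ _ (mem_Ioo.1 hi).2.le, pathPos_append_of_le _ _ (mem_Ioo.1 hi).2.le]
  rw [forall₂_congr hprefix, pathPos_append_of_le _ _ le_rfl, pathPos_append_of_le _ _ le_rfl]
  constructor
  · rintro ⟨hend, hbefore, hmeet⟩
    exact ⟨⟨hbefore, hmeet⟩, add_left_cancel (hmeet ▸ hend)⟩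
  · rintro ⟨⟨hbefore, hmeet⟩, hb⟩
    exact ⟨by rw [hmeet, hb], hbefore, hmeet⟩

/-- `((a₁, a₂), (b₁, b₂)) ↦ (a₁ ++ b₁, a₂ ++ b₂)`. -/
def appendPairEquiv (α : Type*) (m k : ℕ) :
    ((Fin m → α) × (Fin m → α)) × ((Fin k → α) × (Fin k → α)) ≃
      (Fin (m + k) → α) × (Fin (m + k) → α) :=
  (Equiv.prodProdProdComm _ _ _ _).trans ((Fin.appendEquiv m k).prodCongr (Fin.appendEquiv m k))

theorem sum_filter_firstMeet_eq_mul (p : Fin d → ℝ) {m : ℕ} (hm : 0 < m) (k : ℕ) :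
    ∑ gg ∈ (meetingPairs d (m + k)).filter (firstMeet · = m), pairProb d p gg.1 gg.2 =
      (∑ gg ∈ firstMeetingPairs d m, pairProb d p gg.1 gg.2) *
        ∑ gg ∈ meetingPairs d k, pairProb d p gg.1 gg.2 := by
  rw [sum_mul_sum, ← sum_product']
  refine (sum_equiv (appendPairEquiv (Fin d) m k) (fun x => ?_) (fun x hx => ?_)).symm
  · exact mem_product.trans (append_mem_filter_firstMeet_iff hm _ _ _ _).symm
  · simp only [firstMeetingPairs, mem_product, mem_filter] at hx
    exact (pairProb_append p _ _ hx.1.2.2).symm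

theorem sum_meetingPairs_eq_sum_mul (p : Fin d → ℝ) {n : ℕ} (hn : 1 ≤ n) :
    ∑ gg ∈ meetingPairs d n, pairProb d p gg.1 gg.2 =
      ∑ m ∈ Icc 1 n, (∑ gg ∈ firstMeetingPairs d m, pairProb d p gg.1 gg.2) *
        ∑ gg ∈ meetingPairs d (n - m), pairProb d p gg.1 gg.2 := by
  rw [← sum_fiberwise_of_maps_to fun gg hgg => firstMeet_mem_Icc hgg hn]
  refine sum_congr rfl fun m hm => ?_
  obtain ⟨k, rfl⟩ := Nat.exists_eq_add_of_le (mem_Icc.1 hm).2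
  rw [Nat.add_sub_cancel_left]
  exact sum_filter_firstMeet_eq_mul p (mem_Icc.1 hm).1 k

theorem aSeq_zero (p : Fin d → ℝ) : aSeq d p 0 = 1 := by
  simp [aSeq, pairProb, pathEdges, pathPos_zero]

theorem aSeq_eq_sum_bSeq_mul (p : Fin d → ℝ) {n : ℕ} (hn : 1 ≤ n) :
    aSeq d p n = ∑ m ∈ Icc 1 n, bSeq d p m * aSeq d p (n - m) := by
  rw [aSeq, ← meetingPairs, sum_meetingPairs_eq_sum_mul p hn, sum_div]
  refine sum_congr rfl fun m hm => ?_
  rw [bSeq, aSeq, div_mul_div_comm, ← pow_add, ← mul_add, Nat.add_sub_cancel' (mem_Icc.1 hm).2]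
  rfl

theorem pairProb_nonneg {p : Fin d → ℝ} (hp : ∀ i, 0 ≤ p i) {n : ℕ} (γ₁ γ₂ : Fin n → Fin d) :
    0 ≤ pairProb d p γ₁ γ₂ :=
  prod_nonneg fun e _ => hp e.2

theorem aSeq_nonneg {p : Fin d → ℝ} (hp : ∀ i, 0 ≤ p i) (n : ℕ) : 0 ≤ aSeq d p n :=
  div_nonneg (sum_nonneg fun _ _ => pairProb_nonneg hp _ _) ((even_two_mul n).pow_nonneg _)

theorem bSeq_nonneg {p : Fin d → ℝ} (hp : ∀ i, 0 ≤ p i) (m : ℕ) : 0 ≤ bSeq d p m :=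
  div_nonneg (sum_nonneg fun _ _ => pairProb_nonneg hp _ _) ((even_two_mul m).pow_nonneg _)

end OrientedPaths

theorem aSeq_tsum_eq_geometric_of_bSeq_tsum_general
    (d : ℕ)
    (p : Fin d → ℝ) (hp : ∀ i, p i ∈ Set.Ioo (0 : ℝ) 1) :
    ∑' n : ℕ, ENNReal.ofReal (aSeq d p (n + 1))
      = ∑' j : ℕ, (∑' m : ℕ, ENNReal.ofReal (bSeq d p (m + 1))) ^ (j + 1) := by
  have hp₀ : ∀ i, 0 ≤ p i := fun i => (hp i).1.le
  refine tsum_succ_eq_tsum_pow_of_renewal (f := fun n => ENNReal.ofReal (aSeq d p n))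
    (g := fun m => ENNReal.ofReal (bSeq d p m)) (by rw [aSeq_zero, ENNReal.ofReal_one])
    fun n hn => ?_
  rw [aSeq_eq_sum_bSeq_mul p hn, ENNReal.ofReal_sum_of_nonneg fun m _ =>
    mul_nonneg (bSeq_nonneg hp₀ m) (aSeq_nonneg hp₀ _)]
  exact sum_congr rfl fun m _ => ENNReal.ofReal_mul (bSeq_nonneg hp₀ m)

theorem aSeq_tsum_eq_geometric_of_bSeq_tsum
    (d : ℕ) (hd : 1 ≤ d)
    (p : Fin d → ℝ) (hp : ∀ i, p i ∈ Set.Ioo (0 : ℝ) 1) :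
    ∑' n : ℕ, ENNReal.ofReal (aSeq d p (n + 1))
      = ∑' j : ℕ, (∑' m : ℕ, ENNReal.ofReal (bSeq d p (m + 1))) ^ (j + 1) :=
  aSeq_tsum_eq_geometric_of_bSeq_tsum_general d p hp
end

section
/- Let d ≥ 4 and 4 ≤ m ≤ d be integers, and let q* = (1/m, …, 1/m, 0, …, 0) be the d-dimensional probability vector with m coordinates equal to 1/m. Then for every d-dimensional probability vector q with max_{1≤i≤d} q_i ≤ 1/m, one has λ(q) ≤ λ(q*). -/
/-
By Fourier inversion on `(ℤ/M)^d` with `M > n`, the meeting probability at time `n` equals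
`M⁻ᵈ ∑_ξ |∑ᵢ qᵢ ζ^{ξᵢ}|^{2n}` for a primitive `M`-th root of unity `ζ`; hence it is a convex
function of `q`, invariant under permutations of the coordinates. A convex function on the
polytope `{0 ≤ qᵢ ≤ 1/m, ∑ qᵢ = 1}` is bounded by its values at the two points obtained by moving
mass between two coordinates lying strictly inside `(0, 1/m)`, in either direction, until one of
them reaches `0` or `1/m`. Iterating, and noting that a single coordinate cannot be strictly inside
`(0, 1/m)` when all others are `0` or `1/m`, reduces `q` to a vertex: a permutation of `q*`.
-/

/-- `λ(q)` for a `d`-dimensional probability vector `q`: the expected number of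
meetings (at positive times) of two independent oriented random walks associated to `q`,
given by the explicit formula
`λ(q) = ∑_{n ≥ 1} ∑_{l₁+⋯+l_d = n} ( (n!/(l₁!⋯l_d!)) · q₁^{l₁}⋯q_d^{l_d} )²`. -/
noncomputable def lambdaRW (d : ℕ) (q : Fin d → ℝ) : ENNReal :=
  ∑' n : ℕ, ∑ l ∈ Finset.Nat.antidiagonalTuple d (n + 1),
    ENNReal.ofReal (((Nat.multinomial Finset.univ l : ℝ) * ∏ i, q i ^ l i) ^ 2)

open Finset ComplexConjugate

theorem IsPrimitiveRoot.sum_pow_mul_conj_pow {ζ : ℂ} {M : ℕ} (hζ : IsPrimitiveRoot ζ M)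
    {a b : ℕ} (ha : a < M) (hb : b < M) :
    ∑ x : Fin M, ζ ^ (x * a : ℕ) * conj (ζ ^ (x * b : ℕ)) = if a = b then (M : ℂ) else 0 := by
  have hζ0 : ζ ≠ 0 := hζ.ne_zero (by omega)
  have hconj : conj ζ = ζ⁻¹ := (Complex.inv_eq_conj (hζ.norm'_eq_one (by omega))).symm
  set w := ζ ^ a / ζ ^ b
  have hterm : ∀ x : ℕ, ζ ^ (x * a) * conj (ζ ^ (x * b)) = w ^ x := fun x => by
    rw [map_pow, hconj, div_pow, ← pow_mul, ← pow_mul, inv_pow, div_eq_mul_inv, mul_comm a,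
      mul_comm b]
  simp only [hterm]
  rw [Fin.sum_univ_eq_sum_range (w ^ ·)]
  split_ifs with hab
  · simp [w, hab, hζ0]
  · have hw1 : w ≠ 1 := fun h =>
      hab (hζ.pow_inj ha hb ((div_eq_one_iff_eq (pow_ne_zero _ hζ0)).mp h))
    have hwM : w ^ M = 1 := by
      rw [div_pow, ← pow_mul, ← pow_mul, mul_comm a, mul_comm b, pow_mul, pow_mul, hζ.pow_eq_one]
      simp
    rw [geom_sum_eq hw1, hwM, sub_self, zero_div]

theorem IsPrimitiveRoot.sum_prod_pow_mul_conj_pow {ι : Type*} [Fintype ι] [DecidableEq ι]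
    {ζ : ℂ} {M : ℕ} (hζ : IsPrimitiveRoot ζ M) {l l' : ι → ℕ} (hl : ∀ i, l i < M)
    (hl' : ∀ i, l' i < M) :
    ∑ ξ : ι → Fin M, ∏ i, ζ ^ (ξ i * l i : ℕ) * conj (ζ ^ (ξ i * l' i : ℕ)) =
      if l = l' then (M : ℂ) ^ Fintype.card ι else 0 := by
  rw [← Fintype.prod_sum (fun i (x : Fin M) => ζ ^ (x * l i : ℕ) * conj (ζ ^ (x * l' i : ℕ)))]
  simp only [hζ.sum_pow_mul_conj_pow (hl _) (hl' _)]
  split_ifs with h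
  · simp [h]
  · obtain ⟨i, hi⟩ := Function.ne_iff.mp h
    exact prod_eq_zero (mem_univ i) (if_neg hi)

theorem IsPrimitiveRoot.sum_norm_sq_sum_mul_prod_pow {ι : Type*} [Fintype ι] [DecidableEq ι]
    {ζ : ℂ} {M : ℕ} (hζ : IsPrimitiveRoot ζ M) (s : Finset (ι → ℕ))
    (hs : ∀ l ∈ s, ∀ i, l i < M) (a : (ι → ℕ) → ℂ) :
    ∑ ξ : ι → Fin M, ‖∑ l ∈ s, a l * ∏ i, ζ ^ (ξ i * l i : ℕ)‖ ^ 2 =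
      M ^ Fintype.card ι * ∑ l ∈ s, ‖a l‖ ^ 2 := by
  apply Complex.ofReal_injective
  push_cast
  simp only [← Complex.mul_conj', map_sum, map_mul, map_prod, sum_mul_sum]
  rw [sum_comm, mul_sum]
  refine sum_congr rfl fun l hl => ?_
  rw [sum_comm]
  have key : ∀ l' ∈ s, ∑ ξ : ι → Fin M, a l * (∏ i, ζ ^ (ξ i * l i : ℕ)) *
      (conj (a l') * ∏ i, conj (ζ ^ (ξ i * l' i : ℕ))) =
      if l = l' then a l * conj (a l') * (M : ℂ) ^ Fintype.card ι else 0 := fun l' hl' => by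
    rw [← mul_ite_zero, ← hζ.sum_prod_pow_mul_conj_pow (hs l hl) (hs l' hl'), mul_sum]
    refine sum_congr rfl fun ξ _ => ?_
    rw [prod_mul_distrib]; ring
  rw [sum_congr rfl key, sum_ite_eq s l, if_pos hl]
  ring

theorem ConvexOn.sum {𝕜 E β ι : Type*} [Semiring 𝕜] [PartialOrder 𝕜] [AddCommMonoid E]
    [AddCommMonoid β] [PartialOrder β] [IsOrderedAddMonoid β] [SMul 𝕜 E] [Module 𝕜 β]
    {s : Set E} (hs : Convex 𝕜 s) (t : Finset ι) {f : ι → E → β}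
    (hf : ∀ i ∈ t, ConvexOn 𝕜 s (f i)) : ConvexOn 𝕜 s (fun x => ∑ i ∈ t, f i x) := by
  simp only [← Finset.sum_apply]
  exact sum_induction _ (ConvexOn 𝕜 s) (fun _ _ => ConvexOn.add) (convexOn_const (0 : β) hs) hf

theorem mem_segment_sub_smul_add_smul {E : Type*} [AddCommGroup E] [Module ℝ E] (x v : E)
    {s t : ℝ} (hs : 0 ≤ s) (ht : 0 ≤ t) : x ∈ segment ℝ (x - s • v) (x + t • v) := by
  rcases (add_nonneg hs ht).eq_or_lt with hst | hst
  · obtain ⟨rfl, rfl⟩ : s = 0 ∧ t = 0 := ⟨by linarith, by linarith⟩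
    simp
  · refine ⟨t / (s + t), s / (s + t), by positivity, by positivity, by field_simp; ring, ?_⟩
    match_scalars <;> field_simp <;> ring

theorem sum_eq_card_mul_of_forall_eq_zero_or_eq {ι : Type*} {c : ℝ} {s : Finset ι} {p : ι → ℝ}
    (hp : ∀ i ∈ s, p i = 0 ∨ p i = c) : ∑ i ∈ s, p i = #{i ∈ s | p i = c} * c := by
  rw [← nsmul_eq_mul, ← sum_const, sum_filter]
  refine sum_congr rfl fun i hi => ?_
  rcases hp i hi with h | h <;> simp [h]

section CappedSimplex

variable {ι : Type*} [Fintype ι]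

def cappedSimplex (ι : Type*) [Fintype ι] (c : ℝ) : Set (ι → ℝ) :=
  {q | (∀ i, 0 ≤ q i) ∧ (∀ i, q i ≤ c) ∧ ∑ i, q i = 1}

noncomputable def fractionalCoords (c : ℝ) (q : ι → ℝ) : Finset ι :=
  {i | q i ≠ 0 ∧ q i ≠ c}

theorem mem_fractionalCoords {c : ℝ} {q : ι → ℝ} {i : ι} :
    i ∈ fractionalCoords c q ↔ q i ≠ 0 ∧ q i ≠ c := by
  simp [fractionalCoords]

theorem exists_perm_comp_eq_of_forall_eq_zero_or_eq {c : ℝ} (hc : c ≠ 0) {p q : ι → ℝ}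
    (hp : ∀ i, p i = 0 ∨ p i = c) (hq : ∀ i, q i = 0 ∨ q i = c) (hpq : ∑ i, p i = ∑ i, q i) :
    ∃ σ : Equiv.Perm ι, q = p ∘ σ := by
  rw [sum_eq_card_mul_of_forall_eq_zero_or_eq fun i _ => hp i,
    sum_eq_card_mul_of_forall_eq_zero_or_eq fun i _ => hq i, mul_left_inj' hc, Nat.cast_inj] at hpq
  obtain ⟨σ, hσ⟩ := Equiv.Perm.exists_map_finset_eq _ _ hpq
  refine ⟨σ.symm, funext fun i => ?_⟩
  have hiff : q i = c ↔ p (σ.symm i) = c := by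
    have hmem : i ∈ ({i | p i = c} : Finset ι).map σ.toEmbedding ↔ _ := mem_map_equiv
    simpa [hσ] using hmem
  rcases hq i with h | h <;> rcases hp (σ.symm i) with h' | h' <;> simp_all

theorem card_fractionalCoords_ne_one {m : ℕ} {q : ι → ℝ}
    (hq : q ∈ cappedSimplex ι (m : ℝ)⁻¹) : #(fractionalCoords (m : ℝ)⁻¹ q) ≠ 1 := by
  classical
  obtain ⟨hq0, hqc, hq1⟩ := hq
  intro h
  obtain ⟨i, hi⟩ := card_eq_one.mp h
  obtain ⟨hi0, him⟩ := mem_fractionalCoords.mp (hi ▸ mem_singleton_self i)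
  have hrest : ∀ j ∈ univ.erase i, q j = 0 ∨ q j = (m : ℝ)⁻¹ := fun j hj => by
    by_contra hj'
    rw [not_or, ← mem_fractionalCoords, hi, mem_singleton] at hj'
    exact ne_of_mem_erase hj hj'
  set K := #{j ∈ univ.erase i | q j = (m : ℝ)⁻¹}
  have hsum : q i + K * (m : ℝ)⁻¹ = 1 := by
    rw [← sum_eq_card_mul_of_forall_eq_zero_or_eq hrest, add_sum_erase _ _ (mem_univ i), hq1]
  have hm : (0 : ℝ) < m := by
    rcases Nat.eq_zero_or_pos m with rfl | hm
    · simp only [CharP.cast_eq_zero, inv_zero] at hqc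
      exact absurd (le_antisymm (hqc i) (hq0 i)) hi0
    · exact_mod_cast hm
  -- `m * q i = m - K` would be an integer strictly between `0` and `1`
  have hKm : (K : ℝ) < m := by
    have := mul_pos hm ((hq0 i).lt_of_ne' hi0)
    field_simp at hsum; linarith
  have hmK : (m : ℝ) < (K + 1 : ℕ) := by
    have := mul_lt_mul_of_pos_left ((hqc i).lt_of_ne him) hm
    rw [mul_inv_cancel₀ hm.ne'] at this
    field_simp at hsum; push_cast; linarith
  have := Nat.cast_lt.mp hKm
  have := Nat.cast_lt.mp hmK
  omega

theorem exists_add_smul_mem_cappedSimplex_fractionalCoords_ssubset [DecidableEq ι] {c : ℝ}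
    {q : ι → ℝ} (hq : q ∈ cappedSimplex ι c) {i j : ι} (hij : i ≠ j)
    (hi : i ∈ fractionalCoords c q) (hj : j ∈ fractionalCoords c q) :
    ∃ t : ℝ, 0 ≤ t ∧ q + t • (Pi.single i 1 - Pi.single j 1) ∈ cappedSimplex ι c ∧
      fractionalCoords c (q + t • (Pi.single i 1 - Pi.single j 1)) ⊂ fractionalCoords c q := by
  obtain ⟨hq0, hqc, hq1⟩ := hq
  set t := min (c - q i) (q j)
  have ht : 0 ≤ t := le_min (sub_nonneg.mpr (hqc i)) (hq0 j)
  refine ⟨t, ht, ?_⟩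
  set q' := q + t • (Pi.single i 1 - Pi.single j 1 : ι → ℝ)
  have hq'i : q' i = q i + t := by simp [q', hij]
  have hq'j : q' j = q j - t := by simp [q', hij.symm, sub_eq_add_neg]
  have hq'k : ∀ k, k ≠ i → k ≠ j → q' k = q k := fun k hki hkj => by simp [q', hki, hkj]
  refine ⟨⟨fun k => ?_, fun k => ?_, ?_⟩, ?_⟩
  · by_cases hki : k = i
    · subst hki; rw [hq'i]; linarith [hq0 k]
    by_cases hkj : k = j
    · subst hkj; rw [hq'j]; linarith [min_le_right (c - q i) (q k)]
    rw [hq'k k hki hkj]; exact hq0 k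
  · by_cases hki : k = i
    · subst hki; rw [hq'i]; linarith [min_le_left (c - q k) (q j)]
    by_cases hkj : k = j
    · subst hkj; rw [hq'j]; linarith [hqc k]
    rw [hq'k k hki hkj]; exact hqc k
  · simp [q', sum_add_distrib, ← mul_sum, sum_sub_distrib, hq1]
  · refine ssubset_iff_of_subset (fun k hk => ?_) |>.mpr ?_
    · by_cases hki : k = i
      · exact hki ▸ hi
      by_cases hkj : k = j
      · exact hkj ▸ hj
      rwa [mem_fractionalCoords, hq'k k hki hkj, ← mem_fractionalCoords] at hk
    · rcases min_choice (c - q i) (q j) with h | h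
      · refine ⟨i, hi, fun hi' => (mem_fractionalCoords.mp hi').2 ?_⟩
        rw [hq'i, show t = c - q i from h]; ring
      · refine ⟨j, hj, fun hj' => (mem_fractionalCoords.mp hj').1 ?_⟩
        rw [hq'j, show t = q j from h]; ring

theorem ConvexOn.le_of_mem_cappedSimplex {f : (ι → ℝ) → ℝ} (hf : ConvexOn ℝ Set.univ f)
    (hsymm : ∀ (σ : Equiv.Perm ι) (q : ι → ℝ), f (q ∘ σ) = f q) {m : ℕ} {p q : ι → ℝ}
    (hp : ∑ i, p i = 1) (hp_vertex : ∀ i, p i = 0 ∨ p i = (m : ℝ)⁻¹)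
    (hq : q ∈ cappedSimplex ι (m : ℝ)⁻¹) : f q ≤ f p := by
  classical
  induction hn : #(fractionalCoords (m : ℝ)⁻¹ q) using Nat.strong_induction_on generalizing q
    with
  | _ n ih =>
    obtain rfl | rfl | hn2 : n = 0 ∨ n = 1 ∨ 1 < n := by omega
    · have hq_vertex : ∀ i, q i = 0 ∨ q i = (m : ℝ)⁻¹ := fun i => by
        by_contra h
        rw [not_or, ← mem_fractionalCoords, card_eq_zero.mp hn] at h
        exact notMem_empty i h
      have hc : (m : ℝ)⁻¹ ≠ 0 := fun hc => by
        have hq0 : q = 0 := funext fun i => by simpa [hc] using hq_vertex i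
        simpa [hq0] using hq.2.2
      obtain ⟨σ, rfl⟩ := exists_perm_comp_eq_of_forall_eq_zero_or_eq hc hp_vertex hq_vertex
        (hp.trans hq.2.2.symm)
      exact (hsymm σ p).le
    · exact absurd hn (card_fractionalCoords_ne_one hq)
    · obtain ⟨i, hi, j, hj, hij⟩ := one_lt_card.mp (hn ▸ hn2)
      obtain ⟨t, ht, hqt, hqt_lt⟩ :=
        exists_add_smul_mem_cappedSimplex_fractionalCoords_ssubset hq hij hi hj
      obtain ⟨s, hs, hqs, hqs_lt⟩ :=
        exists_add_smul_mem_cappedSimplex_fractionalCoords_ssubset hq hij.symm hj hi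
      rw [← neg_sub, smul_neg, ← sub_eq_add_neg] at hqs hqs_lt
      calc f q ≤ max (f (q - s • (Pi.single i 1 - Pi.single j 1)))
            (f (q + t • (Pi.single i 1 - Pi.single j 1))) :=
            hf.le_on_segment trivial trivial (mem_segment_sub_smul_add_smul q _ hs ht)
        _ ≤ f p := max_le (ih _ (hn ▸ card_lt_card hqs_lt) hqs rfl)
            (ih _ (hn ▸ card_lt_card hqt_lt) hqt rfl)

end CappedSimplex

noncomputable def meetingProb (d N : ℕ) (q : Fin d → ℝ) : ℝ :=
  ∑ l ∈ Finset.Nat.antidiagonalTuple d N,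
    ((Nat.multinomial Finset.univ l : ℝ) * ∏ i, q i ^ l i) ^ 2

section MeetingProb

variable {d : ℕ}

theorem meetingProb_comp_perm (N : ℕ) (σ : Equiv.Perm (Fin d)) (q : Fin d → ℝ) :
    meetingProb d N (q ∘ σ) = meetingProb d N q := by
  refine sum_equiv (σ.arrowCongr (Equiv.refl ℕ)) (fun l => ?_) (fun l _ => ?_)
  · simp only [Finset.Nat.mem_antidiagonalTuple, Equiv.arrowCongr_apply, Equiv.coe_refl,
      Function.comp_apply, id_eq]
    rw [σ.symm.sum_comp l]
  · simp only [Equiv.arrowCongr_apply, Equiv.coe_refl, Function.comp_apply, Nat.multinomial]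
    rw [← σ.symm.sum_comp l, ← σ.symm.prod_comp fun i => (l i).factorial,
      ← σ.symm.prod_comp fun i => q (σ i) ^ l i]
    simp

theorem pow_mul_meetingProb {ζ : ℂ} {M N : ℕ} (hζ : IsPrimitiveRoot ζ M) (hNM : N < M)
    (q : Fin d → ℝ) :
    (M : ℝ) ^ d * meetingProb d N q =
      ∑ ξ : Fin d → Fin M, ‖Fintype.linearCombination ℝ (fun i => ζ ^ (ξ i : ℕ)) q‖ ^ (2 * N) := by
  have hmult : ∀ ξ : Fin d → Fin M,
      (Fintype.linearCombination ℝ (fun i => ζ ^ (ξ i : ℕ)) q) ^ N =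
      ∑ l ∈ Finset.Nat.antidiagonalTuple d N,
        ((Nat.multinomial Finset.univ l * ∏ i, q i ^ l i : ℝ) : ℂ) * ∏ i, ζ ^ (ξ i * l i : ℕ) :=
    fun ξ => by
    rw [Fintype.linearCombination_apply, sum_pow_eq_sum_piAntidiag,
      Finset.piAntidiag_univ_fin_eq_antidiagonalTuple]
    refine sum_congr rfl fun l _ => ?_
    push_cast
    simp only [Complex.real_smul, mul_pow, prod_mul_distrib, pow_mul]
    ring
  have hlt : ∀ l ∈ Finset.Nat.antidiagonalTuple d N, ∀ i, l i < M := fun l hl i =>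
    lt_of_le_of_lt ((Finset.Nat.mem_antidiagonalTuple.mp hl) ▸
      single_le_sum (fun j _ => Nat.zero_le (l j)) (mem_univ i)) hNM
  have hnorm : ∀ z : ℂ, ‖z‖ ^ (2 * N) = ‖z ^ N‖ ^ 2 := fun z => by rw [norm_pow, ← pow_mul']
  simp only [hnorm, hmult]
  rw [hζ.sum_norm_sq_sum_mul_prod_pow _ hlt]
  simp only [Complex.norm_real, Real.norm_eq_abs, sq_abs, Fintype.card_fin, meetingProb]

theorem convexOn_meetingProb (d N : ℕ) : ConvexOn ℝ Set.univ (meetingProb d N) := by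
  obtain ⟨ζ, hζ⟩ : ∃ ζ : ℂ, IsPrimitiveRoot ζ (N + 1) :=
    ⟨_, Complex.isPrimitiveRoot_exp _ N.succ_ne_zero⟩
  have heq : meetingProb d N = fun q => (((N + 1 : ℕ) : ℝ) ^ d)⁻¹ • ∑ ξ : Fin d → Fin (N + 1),
      ‖Fintype.linearCombination ℝ (fun i => ζ ^ (ξ i : ℕ)) q‖ ^ (2 * N) := by
    funext q
    rw [← pow_mul_meetingProb hζ N.lt_succ_self, smul_eq_mul,
      inv_mul_cancel_left₀ (by positivity)]
  rw [heq]
  refine (ConvexOn.sum convex_univ _ fun ξ _ => ?_).smul (by positivity)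
  exact (convexOn_univ_norm.comp_linearMap _).pow (fun _ _ => norm_nonneg _) _

end MeetingProb

theorem lambdaRW_eq_tsum_meetingProb (d : ℕ) (q : Fin d → ℝ) :
    lambdaRW d q = ∑' n : ℕ, ENNReal.ofReal (meetingProb d (n + 1) q) := by
  simp only [lambdaRW, meetingProb]
  congr 1
  funext n
  exact (ENNReal.ofReal_sum_of_nonneg fun _ _ => sq_nonneg _).symm

theorem lambda_le_lambda_packed_general
    (d m : ℕ) (hmd : m ≤ d)
    (q : Fin d → ℝ) (hq : ∀ i, 0 ≤ q i) (hq1 : ∑ i, q i = 1)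
    (hqmax : ∀ i, q i ≤ 1 / (m : ℝ))
    (qstar : Fin d → ℝ) (hqstar : ∀ i, qstar i = if (i : ℕ) < m then 1 / (m : ℝ) else 0) :
    lambdaRW d q ≤ lambdaRW d qstar := by
  simp only [one_div] at hqmax hqstar
  have hm : (m : ℝ) ≠ 0 := by
    rintro hm
    simp only [hm, inv_zero] at hqmax
    linarith [sum_nonpos fun i (_ : i ∈ univ) => hqmax i]
  have hqstar_vertex : ∀ i, qstar i = 0 ∨ qstar i = (m : ℝ)⁻¹ := fun i => by
    rw [hqstar]; split_ifs <;> simp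
  have hqstar_sum : ∑ i, qstar i = 1 := by
    simp [hqstar, sum_ite, Fin.card_filter_val_lt, min_eq_right hmd, hm]
  rw [lambdaRW_eq_tsum_meetingProb, lambdaRW_eq_tsum_meetingProb]
  exact ENNReal.tsum_le_tsum fun n => ENNReal.ofReal_le_ofReal <|
    (convexOn_meetingProb d (n + 1)).le_of_mem_cappedSimplex (meetingProb_comp_perm _)
      hqstar_sum hqstar_vertex ⟨hq, hqmax, hq1⟩

theorem lambda_le_lambda_packed
    (d m : ℕ) (hd : 4 ≤ d) (hm : 4 ≤ m) (hmd : m ≤ d)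
    (q : Fin d → ℝ) (hq : ∀ i, 0 ≤ q i) (hq1 : ∑ i, q i = 1)
    (hqmax : ∀ i, q i ≤ 1 / (m : ℝ))
    (qstar : Fin d → ℝ) (hqstar : ∀ i, qstar i = if (i : ℕ) < m then 1 / (m : ℝ) else 0) :
    lambdaRW d q ≤ lambdaRW d qstar :=
  lambda_le_lambda_packed_general d m hmd q hq hq1 hqmax qstar hqstar
end

section
/- For x ∈ [0,1] let Z_n(x) = ζ_1(x) + ⋯ + ζ_n(x) be the lazy random walk on ℤ whose i.i.d. steps satisfy ℚ(ζ_i(x) = 0) = x and ℚ(ζ_i(x) = −1) = ℚ(ζ_i(x) = 1) = (1−x)/2. Then for every fixed n ≥ 1, the function F_n : [1/2, 1] → [0,1] defined by F_n(x) = ℚ(Z_n(x) = 0) is monotone increasing on [1/2, 1]. Explicitly, F_n(x) = ∑_{j=0}^{n} C(n,j) x^j (1−x)^{n−j} a_{n−j}, where a_r = C(r, r/2)·2^{−r} if r is even and a_r = 0 if r is odd, and this function of x is monotone increasing on [1/2, 1]. -/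
/-!
The lazy step `ζ(x)` has characteristic function `x + (1 - x) cos θ`, so by Fourier inversion
`F_n(x) = (2π)⁻¹ ∫₀^{2π} (x + (1 - x) cos θ)ⁿ dθ`; concretely, expanding the power binomially reduces
this to the Wallis integrals `∫₀^{2π} cosʳ θ dθ = 2π a_r`. For `x ≥ 1/2` the base
`x + (1 - x) cos θ` lies in `[2x - 1, 1] ⊆ [0, 1]` and is nondecreasing in `x` (its `x`-derivative is
`1 - cos θ ≥ 0`), so the integrand, and hence `F_n`, is nondecreasing with values in `[0, 1]`.
-/

open Real Finset intervalIntegral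

/-- `a_r = C(r, r/2) · 2^{-r}` for even `r`, and `a_r = 0` for odd `r`: the probability
that a symmetric simple random walk on `ℤ` is back at `0` after `r` steps. -/
noncomputable def aCoef (r : ℕ) : ℝ :=
  if Even r then (r.choose (r / 2) : ℝ) / 2 ^ r else 0

/-- `F_n(x) = ℚ(Z_n(x) = 0) = ∑_{j=0}^{n} C(n,j) x^j (1-x)^{n-j} a_{n-j}`, the
probability that the lazy random walk with laziness `x` is at `0` at time `n`. -/
noncomputable def lazyReturnProb (n : ℕ) (x : ℝ) : ℝ :=
  ∑ j ∈ Finset.range (n + 1), (n.choose j : ℝ) * x ^ j * (1 - x) ^ (n - j) * aCoef (n - j)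

lemma aCoef_two_mul (m : ℕ) : aCoef (2 * m) = m.centralBinom / 2 ^ (2 * m) := by
  simp [aCoef, Nat.centralBinom]

lemma aCoef_two_mul_add_one (m : ℕ) : aCoef (2 * m + 1) = 0 := by
  simp [aCoef]

lemma aCoef_add_two (r : ℕ) : aCoef (r + 2) = (r + 1) / (r + 2) * aCoef r := by
  obtain ⟨m, rfl | rfl⟩ := Nat.even_or_odd' r
  · have hrec : ((m + 1 : ℕ) : ℝ) * (m + 1).centralBinom = 2 * (2 * m + 1) * m.centralBinom := by
      exact_mod_cast Nat.succ_mul_centralBinom_succ m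
    rw [show 2 * m + 2 = 2 * (m + 1) by ring, aCoef_two_mul, aCoef_two_mul, mul_add,
      pow_add]
    push_cast at hrec ⊢
    field_simp
    linear_combination hrec
  · rw [show 2 * m + 1 + 2 = 2 * (m + 1) + 1 by ring, aCoef_two_mul_add_one,
      aCoef_two_mul_add_one, mul_zero]

lemma integral_cos_pow_zero_two_pi (r : ℕ) :
    ∫ θ in (0 : ℝ)..2 * π, cos θ ^ r = 2 * π * aCoef r := by
  induction r using Nat.twoStepInduction with
  | zero => simp [aCoef]
  | one => simp [aCoef]
  | more r ih _ =>
    rw [integral_cos_pow, ih, aCoef_add_two]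
    simp only [sin_two_pi, sin_zero, mul_zero, sub_zero, zero_div, zero_add]
    ring

lemma lazyReturnProb_eq_integral (n : ℕ) (x : ℝ) :
    lazyReturnProb n x = (2 * π)⁻¹ * ∫ θ in (0 : ℝ)..2 * π, (x + (1 - x) * cos θ) ^ n := by
  have hexpand (θ : ℝ) : (x + (1 - x) * cos θ) ^ n =
      ∑ j ∈ range (n + 1), (n.choose j : ℝ) * x ^ j * (1 - x) ^ (n - j) * cos θ ^ (n - j) := by
    rw [add_pow]
    refine sum_congr rfl fun j _ => ?_
    rw [mul_pow]
    ring
  simp_rw [hexpand]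
  rw [integral_finsetSum fun j _ => Continuous.intervalIntegrable (by fun_prop) _ _, mul_sum,
    lazyReturnProb]
  refine sum_congr rfl fun j _ => ?_
  rw [integral_const_mul, integral_cos_pow_zero_two_pi]
  field_simp

section LazyStep

variable {x y : ℝ} (θ : ℝ)

lemma lazy_step_nonneg (hx : 1 / 2 ≤ x) (hx₁ : x ≤ 1) : 0 ≤ x + (1 - x) * cos θ := by
  nlinarith [neg_one_le_cos θ]

lemma lazy_step_le_one (hx₁ : x ≤ 1) : x + (1 - x) * cos θ ≤ 1 := by
  nlinarith [cos_le_one θ]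

lemma lazy_step_mono (hxy : x ≤ y) : x + (1 - x) * cos θ ≤ y + (1 - y) * cos θ := by
  nlinarith [cos_le_one θ]

end LazyStep

theorem lazyReturnProb_monotoneOn_general (n : ℕ) :
    MonotoneOn (lazyReturnProb n) (Set.Icc (1 / 2 : ℝ) 1) ∧
      ∀ x ∈ Set.Icc (1 / 2 : ℝ) 1, lazyReturnProb n x ∈ Set.Icc (0 : ℝ) 1 := by
  have hπ : 0 < 2 * π := by positivity
  have hint (x : ℝ) : IntervalIntegrable (fun θ => (x + (1 - x) * cos θ) ^ n) MeasureTheory.volume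
      0 (2 * π) := Continuous.intervalIntegrable (by fun_prop) _ _
  refine ⟨fun x ⟨hx, _⟩ y ⟨_, hy₁⟩ hxy => ?_, fun x ⟨hx, hx₁⟩ => ⟨?_, ?_⟩⟩
  · simp only [lazyReturnProb_eq_integral]
    gcongr
    refine integral_mono_on hπ.le (hint x) (hint y) fun θ _ => ?_
    exact pow_le_pow_left₀ (lazy_step_nonneg θ hx (hxy.trans hy₁)) (lazy_step_mono θ hxy) n
  · rw [lazyReturnProb_eq_integral]
    exact mul_nonneg (by positivity)
      (integral_nonneg hπ.le fun θ _ => pow_nonneg (lazy_step_nonneg θ hx hx₁) n)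
  · have hbound : ∫ θ in (0 : ℝ)..2 * π, (x + (1 - x) * cos θ) ^ n ≤ 2 * π := by
      simpa using integral_mono_on hπ.le (hint x) intervalIntegrable_const fun θ _ =>
        pow_le_one₀ (lazy_step_nonneg θ hx hx₁) (lazy_step_le_one θ hx₁)
    rw [lazyReturnProb_eq_integral, inv_mul_le_one₀ hπ]
    exact hbound

theorem lazyReturnProb_monotoneOn (n : ℕ) (hn : 1 ≤ n) :
    MonotoneOn (lazyReturnProb n) (Set.Icc (1 / 2 : ℝ) 1) ∧
      ∀ x ∈ Set.Icc (1 / 2 : ℝ) 1, lazyReturnProb n x ∈ Set.Icc (0 : ℝ) 1 :=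
  lazyReturnProb_monotoneOn_general n
end

section
/- Let m ≥ 1, j ≥ 1 and 0 ≤ ℓ ≤ m−1 be integers and set n = jm + ℓ. Then (jm+ℓ)! / ( [(j+1)!]^ℓ · (j!)^{m−ℓ} ) ≤ e^{1/(12m)} · √m · m^{jm+ℓ} / ( (2π)^{(m−1)/2} · j^{(m−1)/2} ). In particular, the inequality (j + ℓ/m)^{jm+ℓ} ≤ (j+1)^{(j+1)ℓ} · j^{j(m−ℓ)} holds for all such j, ℓ, m. -/
/-!
Robbins' form of Stirling's formula, `√(2πn) (n/e)^n ≤ n! ≤ √(2πn) (n/e)^n e^{1/(12n)}`, bounds the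
numerator from above and each factorial of the denominator from below; the powers of `e` cancel
because `(j+1)ℓ + j(m-ℓ) = jm+ℓ = n`. Two elementary inequalities then finish the proof. Since
`n/m = j + ℓ/m` is the harmonic mean of `j+1` and `j` with weights `(j+1)ℓ` and `j(m-ℓ)`, the
weighted HM-GM inequality gives `(n/m)^n ≤ (j+1)^{(j+1)ℓ} j^{j(m-ℓ)}`, which is the second claim and
controls the main terms. The square-root factors are controlled by the Bernoulli-type estimate
`n j^ℓ ≤ m (j+1)^ℓ j`.
-/

open Real Filter Topology Nat Stirling

theorem Real.sqrt_pow {x : ℝ} (hx : 0 ≤ x) (n : ℕ) : √(x ^ n) = √x ^ n := by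
  rw [← sqrt_sq (pow_nonneg (sqrt_nonneg x) n), ← pow_mul, mul_comm, pow_mul, sq_sqrt hx]

namespace Stirling

theorem stirlingSeq_le_sqrt_pi_mul_exp {n : ℕ} (hn : n ≠ 0) :
    stirlingSeq n ≤ √π * exp (1 / (12 * n)) := by
  -- Robbins' stepwise bound makes `log (stirlingSeq k) - 1 / (12 k)` increase to `log √π`.
  let f (k : ℕ) : ℝ := log (stirlingSeq (k + 1)) - 1 / (12 * (k + 1 : ℕ))
  have hf : Monotone f := monotone_nat_of_le_succ fun k => by
    have hstep := log_stirlingSeq_sdiff_le (k + 1)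
    have htelescope : (1 : ℝ) / (12 * (k + 1) * (k + 1 + 1))
        = 1 / (12 * (k + 1)) - 1 / (12 * (k + 1 + 1)) := by
      field_simp; ring
    simp only [f]
    push_cast at hstep ⊢
    linarith
  have hlim : Tendsto f atTop (𝓝 (log √π)) := by
    have hs := (tendsto_stirlingSeq_sqrt_pi.comp (tendsto_add_atTop_nat 1)).log
      (by positivity)
    have h12 : Tendsto (fun k : ℕ => 1 / (12 * ((k + 1 : ℕ) : ℝ))) atTop (𝓝 0) := by
      simpa using tendsto_one_div_add_atTop_nhds_zero_nat.mul_const (1 / 12 : ℝ)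
    rw [← sub_zero (log √π)]
    exact hs.sub h12
  obtain ⟨k, rfl⟩ := exists_eq_succ_of_ne_zero hn
  have hk := hf.ge_of_tendsto hlim k
  rw [← exp_log (stirlingSeq'_pos k), ← exp_log (by positivity : (0 : ℝ) < √π), ← exp_add]
  exact exp_le_exp.mpr (by simp only [f] at hk; linarith)

theorem factorial_le_stirling_mul_exp {n : ℕ} (hn : n ≠ 0) :
    (n ! : ℝ) ≤ √(2 * π * n) * (n / exp 1) ^ n * exp (1 / (12 * n)) := by
  have : √(2 * π * n) * (n / exp 1) ^ n * exp (1 / (12 * n)) =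
      √π * exp (1 / (12 * n)) * (√(2 * n) * (n / exp 1) ^ n) := by
    simp [sqrt_mul']; ring
  rw [this, ← div_le_iff₀ (by positivity)]
  exact stirlingSeq_le_sqrt_pi_mul_exp hn

end Stirling

theorem harm_mean_pow_le_pow_mul_pow {x y : ℝ} (hx : 0 < x) (hy : 0 < y) {a b : ℕ}
    (hab : 0 < a + b) :
    ((a + b) / (a / x + b / y)) ^ (a + b) ≤ x ^ a * y ^ b := by
  have hn : (0 : ℝ) < a + b := by exact_mod_cast hab
  have hd : (0 : ℝ) < a / x + b / y := by
    rcases a.eq_zero_or_pos with rfl | ha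
    · have hb : (0 : ℝ) < b := by exact_mod_cast (zero_add b) ▸ hab
      simpa using div_pos hb hy
    · exact add_pos_of_pos_of_nonneg (div_pos (by exact_mod_cast ha) hx) (by positivity)
  have hw : (a / (a + b) : ℝ) + b / (a + b) = 1 := by field_simp
  have hgm := geom_mean_le_arith_mean2_weighted (by positivity) (by positivity)
    (inv_pos.2 hx).le (inv_pos.2 hy).le hw
  rw [inv_rpow hx.le, inv_rpow hy.le, ← mul_inv] at hgm
  have hhm : (a + b) / (a / x + b / y) ≤ x ^ (a / (a + b) : ℝ) * y ^ (b / (a + b) : ℝ) := by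
    rw [div_le_iff₀ hd]
    rw [inv_le_iff_one_le_mul₀' (by positivity)] at hgm
    calc (a + b : ℝ) ≤ (a + b) * ((x ^ (a / (a + b) : ℝ) * y ^ (b / (a + b) : ℝ)) *
          (a / (a + b) * x⁻¹ + b / (a + b) * y⁻¹)) := le_mul_of_one_le_right hn.le hgm
      _ = _ := by field_simp
  calc ((a + b) / (a / x + b / y)) ^ (a + b)
      ≤ (x ^ (a / (a + b) : ℝ) * y ^ (b / (a + b) : ℝ)) ^ (a + b) := by gcongr
    _ = x ^ a * y ^ b := by
      rw [mul_pow, ← rpow_natCast, ← rpow_natCast, ← rpow_mul hx.le, ← rpow_mul hy.le]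
      push_cast
      rw [div_mul_cancel₀ _ hn.ne', div_mul_cancel₀ _ hn.ne', rpow_natCast, rpow_natCast]

theorem add_div_pow_le_succ_pow_mul_pow {m j ℓ : ℕ} (hm : 0 < m) (hj : 0 < j) (hℓ : ℓ ≤ m) :
    ((j : ℝ) + ℓ / m) ^ (j * m + ℓ) ≤ ((j : ℝ) + 1) ^ ((j + 1) * ℓ) * (j : ℝ) ^ (j * (m - ℓ)) := by
  have hsum : (j + 1) * ℓ + j * (m - ℓ) = j * m + ℓ := by
    obtain ⟨k, rfl⟩ := Nat.exists_eq_add_of_le hℓ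
    rw [Nat.add_sub_cancel_left]; ring
  have hpos : 0 < (j + 1) * ℓ + j * (m - ℓ) := by rw [hsum]; positivity
  have hhm := harm_mean_pow_le_pow_mul_pow (x := (j : ℝ) + 1) (y := j) (by positivity)
    (by positivity) hpos
  rw [hsum] at hhm
  convert hhm using 2
  push_cast [hsum, Nat.cast_sub hℓ]
  rw [mul_div_cancel_left₀ _ (by positivity), mul_div_cancel_left₀ _ (by positivity), add_sub_cancel]
  field_simp
  ring

theorem Nat.mul_add_mul_pow_le_mul_succ_pow_mul {j m : ℕ} (hm : 1 ≤ m) (ℓ : ℕ) :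
    (j * m + ℓ) * j ^ ℓ ≤ m * (j + 1) ^ ℓ * j := by
  induction ℓ with
  | zero => simp [mul_comm]
  | succ ℓ ih =>
    calc (j * m + (ℓ + 1)) * j ^ (ℓ + 1) = (j * m + ℓ) * j ^ ℓ * j + j ^ ℓ * j := by ring
      _ ≤ m * (j + 1) ^ ℓ * j * j + m * (j + 1) ^ ℓ * j := by
          gcongr
          exact (Nat.pow_le_pow_left j.le_succ ℓ).trans (le_mul_of_one_le_left' hm)
      _ = m * (j + 1) ^ (ℓ + 1) * j := by ring

theorem sqrt_mul_add_div_le {m j ℓ : ℕ} (hj : 0 < j) (hℓ : ℓ < m) :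
    √((j * m + ℓ : ℕ) : ℝ) / (√((j : ℝ) + 1) ^ ℓ * √(j : ℝ) ^ (m - ℓ))
      ≤ √(m : ℝ) / √(j : ℝ) ^ (m - 1) := by
  obtain ⟨k, rfl⟩ := Nat.exists_eq_add_of_lt hℓ
  rw [show ℓ + k + 1 - ℓ = k + 1 by omega, show ℓ + k + 1 - 1 = ℓ + k by omega,
    div_le_div_iff₀ (by positivity) (by positivity)]
  have hnat : ((j * (ℓ + k + 1) + ℓ : ℕ) : ℝ) * j ^ ℓ ≤ ((ℓ + k + 1 : ℕ) : ℝ) * (j + 1) ^ ℓ * j := by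
    exact_mod_cast Nat.mul_add_mul_pow_le_mul_succ_pow_mul (by omega) ℓ
  have hsqrt := sqrt_le_sqrt hnat
  rw [sqrt_mul (by positivity), sqrt_mul (by positivity), sqrt_mul (by positivity),
    Real.sqrt_pow (by positivity), Real.sqrt_pow (by positivity)] at hsqrt
  calc √((j * (ℓ + k + 1) + ℓ : ℕ) : ℝ) * √(j : ℝ) ^ (ℓ + k)
      = √((j * (ℓ + k + 1) + ℓ : ℕ) : ℝ) * √(j : ℝ) ^ ℓ * √(j : ℝ) ^ k := by ring
    _ ≤ √((ℓ + k + 1 : ℕ) : ℝ) * √((j : ℝ) + 1) ^ ℓ * √(j : ℝ) * √(j : ℝ) ^ k := by gcongr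
    _ = _ := by ring

theorem factorial_div_factorial_pow_mul_factorial_pow_le {m j ℓ : ℕ} (hj : 0 < j) (hℓ : ℓ < m) :
    ((j * m + ℓ) ! : ℝ) / (((j + 1) ! : ℝ) ^ ℓ * (j ! : ℝ) ^ (m - ℓ))
      ≤ exp (1 / (12 * ((j * m + ℓ : ℕ) : ℝ)))
        * (√((j * m + ℓ : ℕ) : ℝ) / (√((j : ℝ) + 1) ^ ℓ * √(j : ℝ) ^ (m - ℓ)))
        * (((j * m + ℓ : ℕ) : ℝ) ^ (j * m + ℓ)
          / (((j : ℝ) + 1) ^ ((j + 1) * ℓ) * (j : ℝ) ^ (j * (m - ℓ))))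
        / √(2 * π) ^ (m - 1) := by
  have hn : j * m + ℓ ≠ 0 := by have := Nat.mul_pos hj (by omega : 0 < m); omega
  calc ((j * m + ℓ) ! : ℝ) / (((j + 1) ! : ℝ) ^ ℓ * (j ! : ℝ) ^ (m - ℓ))
      ≤ √(2 * π * (j * m + ℓ : ℕ)) * ((j * m + ℓ : ℕ) / exp 1) ^ (j * m + ℓ)
          * exp (1 / (12 * (j * m + ℓ : ℕ)))
        / ((√(2 * π * (j + 1 : ℕ)) * ((j + 1 : ℕ) / exp 1) ^ (j + 1)) ^ ℓ
          * (√(2 * π * j) * (j / exp 1) ^ j) ^ (m - ℓ)) := by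
        gcongr
        · exact factorial_le_stirling_mul_exp hn
        · exact le_factorial_stirling _
        · exact le_factorial_stirling _
    _ = _ := by
        obtain ⟨k, rfl⟩ := Nat.exists_eq_add_of_lt hℓ
        rw [show ℓ + k + 1 - ℓ = k + 1 by omega, show ℓ + k + 1 - 1 = ℓ + k by omega]
        simp only [sqrt_mul' _ (Nat.cast_nonneg _), mul_pow, div_pow, ← pow_mul]
        push_cast
        field_simp
        ring

theorem balanced_multinomial_stirling_bound
    (m j ℓ : ℕ) (hm : 1 ≤ m) (hj : 1 ≤ j) (hℓ : ℓ ≤ m - 1) :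
    ((j * m + ℓ).factorial : ℝ)
        / (((j + 1).factorial : ℝ) ^ ℓ * ((j.factorial : ℝ)) ^ (m - ℓ))
      ≤ Real.exp (1 / (12 * (m : ℝ))) * Real.sqrt m * (m : ℝ) ^ (j * m + ℓ)
        / (Real.sqrt (2 * Real.pi) ^ (m - 1) * Real.sqrt j ^ (m - 1)) ∧
    ((j : ℝ) + (ℓ : ℝ) / (m : ℝ)) ^ (j * m + ℓ)
      ≤ ((j : ℝ) + 1) ^ ((j + 1) * ℓ) * (j : ℝ) ^ (j * (m - ℓ)) := by
  have hℓm : ℓ < m := by omega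
  have hpow := add_div_pow_le_succ_pow_mul_pow hm hj hℓm.le
  refine ⟨?_, hpow⟩
  have hmn : (m : ℝ) ≤ (j * m + ℓ : ℕ) := by exact_mod_cast le_add_right (le_mul_of_one_le_left' hj)
  have hnn : ((j * m + ℓ : ℕ) : ℝ) ^ (j * m + ℓ)
      / (((j : ℝ) + 1) ^ ((j + 1) * ℓ) * (j : ℝ) ^ (j * (m - ℓ))) ≤ (m : ℝ) ^ (j * m + ℓ) := by
    have hmean : (j : ℝ) + ℓ / m = ((j * m + ℓ : ℕ) : ℝ) / m := by push_cast; field_simp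
    rw [hmean, div_pow, div_le_iff₀ (by positivity)] at hpow
    rw [div_le_iff₀ (by positivity)]
    exact hpow.trans_eq (mul_comm _ _)
  calc _ ≤ _ := factorial_div_factorial_pow_mul_factorial_pow_le hj hℓm
    _ ≤ exp (1 / (12 * (m : ℝ))) * (√(m : ℝ) / √(j : ℝ) ^ (m - 1)) * (m : ℝ) ^ (j * m + ℓ)
          / √(2 * π) ^ (m - 1) := by
        gcongr ?_ * ?_ * ?_ / _
        · gcongr
        · exact sqrt_mul_add_div_le hj hℓm
    _ = _ := by field_simp
end
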